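/- The symmetrized verifier score also need not satisfy the triangle inequality: with s'(A,B) := (s(A,B) + s(B,A))/2, there exist nonempty finite sets A, B, C of natural numbers (with the designated element e outside A ∪ B ∪ C) such that s'(A,C) > s'(A,B) + s'(B,C). For example, A = {1}, B = {1,2}, C = {2} gives s'(A,B) = 1/4, s'(B,C) = 1/4, and s'(A,C) = 1. Consequently the symmetrized Fixing Identification Distance d^sym_E need not satisfy the triangle inequality. -/
import Mathlib


/-- The verifier score `s(A,B)` for finite sets of canonicalized symbolic
expressions, with designated degenerate estimand `e` (representing `p(y)`).
Real division satisfies the convention `x / 0 = 0`. -/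
noncomputable def verifierScore {β : Type*} [DecidableEq β] (e : β)
    (A B : Finset β) : ℝ :=
  if A = ∅ ∧ B = ∅ then 0
  else if A = ∅ ∧ B ≠ ∅ then 1
  else if B = {e} ∧ A ≠ {e} then 1
  else 1 - (A ∩ B).card / B.card

/-- The symmetrized verifier score `s'(A,B) = (s(A,B) + s(B,A))/2`. -/
noncomputable def symVerifierScore {β : Type*} [DecidableEq β] (e : β)
    (A B : Finset β) : ℝ :=
  (verifierScore e A B + verifierScore e B A) / 2

/-- The symmetrized verifier score also need not satisfy the triangle
inequality: there exist nonempty finite sets `A`, `B`, `C` of natural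
numbers, with the designated element `e` outside `A ∪ B ∪ C`, such that
`s'(A,C) > s'(A,B) + s'(B,C)`. For example `A = {1}`, `B = {1,2}`,
`C = {2}` gives `s'(A,B) = 1/4`, `s'(B,C) = 1/4`, `s'(A,C) = 1`.
Consequently the symmetrized Fixing Identification Distance need not
satisfy the triangle inequality. -/
theorem symVerifierScore_no_triangle :
    ∃ (e : ℕ) (A B C : Finset ℕ), A.Nonempty ∧ B.Nonempty ∧ C.Nonempty ∧
      e ∉ A ∪ B ∪ C ∧
      symVerifierScore e A B + symVerifierScore e B C
        < symVerifierScore e A C := by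
  refine ⟨0, {1}, {1,2}, {2}, ⟨1, by decide⟩, ⟨1, by decide⟩, ⟨2, by decide⟩,
    by decide, ?_⟩
  have h12 : ({1,2} : Finset ℕ) ≠ {0} := by decide
  have h1 : ({1} : Finset ℕ) ≠ {0} := by decide
  have h2 : ({2} : Finset ℕ) ≠ {0} := by decide
  simp only [verifierScore, symVerifierScore]
  norm_num [Finset.inter_comm, h12, h1, h2, show ({1} : Finset ℕ) ∩ {1,2} = {1} by decide,
    show ({1,2} : Finset ℕ) ∩ {2} = {2} by decide,
    show ({1} : Finset ℕ) ∩ {2} = ∅ by decide]
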